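/- Let p : F → E be a connected covering of directed graphs, v ∈ F⁰, T a spanning tree for E, and c := c_{p(v),T} : E¹ → π₁(E, p(v)) the labelling c(e) = a_{s(e)} e a_{r(e)}⁻¹ determined by T and base point p(v). Then F is isomorphic, as a directed graph, to the relative skew product E ×_c (π₁(E, p(v)) / p∗π₁(F, v)). -/

import Mathlib

/-- A directed graph `E = (E⁰, E¹, r, s)`. -/
structure Digraph' : Type 1 where
  V : Type
  E : Type
  r : E → V
  s : E → V

namespace Digraph'

/-- A step in a walk: an edge traversed forwards (`true`) or backwards (`false`). -/
abbrev Step (X : Digraph') : Type := X.E × Bool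

def stepSrc (X : Digraph') (p : X.Step) : X.V := if p.2 then X.s p.1 else X.r p.1

def stepTgt (X : Digraph') (p : X.Step) : X.V := if p.2 then X.r p.1 else X.s p.1

/-- `X.IsWalk u v l`: `l` is a walk from `u` to `v`. -/
def IsWalk (X : Digraph') : X.V → X.V → List X.Step → Prop
  | u, v, [] => u = v
  | u, v, p :: l => X.stepSrc p = u ∧ X.IsWalk (X.stepTgt p) v l

/-- A walk is reduced if it contains no subwalk `e e⁻¹` or `e⁻¹ e`. -/
def Reduced (X : Digraph') (l : List X.Step) : Prop :=
  List.Chain' (fun p q => ¬(p.1 = q.1 ∧ p.2 = !q.2)) l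

/-- The reverse of a walk, traversing it backwards and inverting each edge. -/
def winv (X : Digraph') (l : List X.Step) : List X.Step :=
  (l.map fun p => (p.1, !p.2)).reverse

open Classical in
/-- The reduction of a walk: repeatedly delete adjacent pairs `e e⁻¹`, `e⁻¹ e`. -/
noncomputable def red (X : Digraph') : List X.Step → List X.Step
  | [] => []
  | p :: l =>
    match X.red l with
    | [] => [p]
    | q :: m => if p.1 = q.1 ∧ p.2 = !q.2 then m else p :: q :: m

/-- The reduced loops in `X` based at `u`; the carrier of `π₁(X, u)`. -/
abbrev Loop (X : Digraph') (u : X.V) : Type :=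
  {l : List X.Step // X.IsWalk u u l ∧ X.Reduced l}

/-- `X` is connected: there is a walk between any two vertices. -/
def Connected (X : Digraph') : Prop := ∀ u v : X.V, ∃ l, X.IsWalk u v l

end Digraph'

/-- A morphism of directed graphs. -/
structure Digraph'.Hom (F E : Digraph') where
  vmap : F.V → E.V
  emap : F.E → E.E
  hr : ∀ e, E.r (emap e) = vmap (F.r e)
  hs : ∀ e, E.s (emap e) = vmap (F.s e)

/-- The action of a graph morphism on walks. -/
def Digraph'.Hom.wmap {F E : Digraph'} (p : Digraph'.Hom F E) (l : List F.Step) :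
    List E.Step :=
  l.map fun q => (p.emap q.1, q.2)

/-- A covering of directed graphs: a surjective morphism restricting to bijections
on incoming and outgoing edge sets at each vertex. -/
structure Digraph'.IsCovering {F E : Digraph'} (p : Digraph'.Hom F E) : Prop where
  vsurj : Function.Surjective p.vmap
  esurj : Function.Surjective p.emap
  rbij : ∀ v : F.V, Set.BijOn p.emap {e | F.r e = v} {e | E.r e = p.vmap v}
  sbij : ∀ v : F.V, Set.BijOn p.emap {e | F.s e = v} {e | E.s e = p.vmap v}

namespace Digraph'

/-- The relative skew product `E ×_c (G/H)` of a graph `E` by a labelling `c : E¹ → G`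
relative to a subgroup `H ≤ G`: vertices `E⁰ × (G/H)`, edges `E¹ × (G/H)`,
`r(e, gH) = (r(e), gH)`, `s(e, gH) = (s(e), c(e)gH)`. -/
def skew (X : Digraph') {G : Type} [Group G] (c : X.E → G) (H : Subgroup G) : Digraph' where
  V := X.V × (G ⧸ H)
  E := X.E × (G ⧸ H)
  r := fun p => (X.r p.1, p.2)
  s := fun p => (X.s p.1, c p.1 • p.2)

/-- The coordinate projection `(x, gH) ↦ x` from `E ×_c (G/H)` to `E`. -/
def skewProj (X : Digraph') {G : Type} [Group G] (c : X.E → G) (H : Subgroup G) :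
    Digraph'.Hom (X.skew c H) X where
  vmap := Prod.fst
  emap := Prod.fst
  hr := fun _ => rfl
  hs := fun _ => rfl

/-- A walk lies in a set `T` of edges. -/
def InTree (X : Digraph') (T : Set X.E) (l : List X.Step) : Prop :=
  ∀ q ∈ l, q.1 ∈ T

/-- `T` is a spanning tree of `X`: between any two vertices there is exactly one
reduced walk lying in `T`. -/
def IsSpanningTree (X : Digraph') (T : Set X.E) : Prop :=
  ∀ u w : X.V, ∃! l : List X.Step, X.IsWalk u w l ∧ X.Reduced l ∧ X.InTree T l

end Digraph'

open Digraph'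

/-!
Reduced walks are reduced words in the free group on the edges, so `π₁(E, p v)` embeds in
`FreeGroup E¹` and identities between loops can be checked there. For a walk `l` from `v` to
`w` in `F`, the loop `p(l) a_{p w}⁻¹` is determined by `w` up to left multiplication by
`p∗π₁(F, v)`, which gives the vertex map `w ↦ (p w, [(p(l) a_{p w}⁻¹)⁻¹])`. Appending an edge
`e` to `l` multiplies this loop by `c(p e)`, so the map is a graph morphism; it is injective
because lifts from `v` of walks with the same reduced image end at the same vertex, and
surjective because walks lift along `p`. On edges it is then bijective because both `p` and
the projection of the skew product are bijective on incoming edges.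
-/

namespace Digraph'

section Reduction

variable {X : Digraph'}

open Classical in
theorem red_eq_reduce (l : List X.Step) : X.red l = FreeGroup.reduce l := by
  induction l with
  | nil => rfl
  | cons p l ih =>
    rw [red, ih, FreeGroup.reduce.cons]
    rcases FreeGroup.reduce l with _ | ⟨q, m⟩ <;> rfl

theorem reduced_iff_isReduced {l : List X.Step} : X.Reduced l ↔ FreeGroup.IsReduced l := by
  have hrel : (fun p q : X.Step => ¬(p.1 = q.1 ∧ p.2 = !q.2)) =
      fun p q => p.1 = q.1 → p.2 = q.2 := by
    funext p q
    cases p.2 <;> cases q.2 <;> simp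
  rw [Reduced, FreeGroup.IsReduced, hrel]
  rfl

theorem winv_eq_invRev (l : List X.Step) : X.winv l = FreeGroup.invRev l := rfl

theorem mk_red (l : List X.Step) : FreeGroup.mk (X.red l) = FreeGroup.mk l := by
  classical
  rw [red_eq_reduce, FreeGroup.reduce.self]

theorem reduced_red (l : List X.Step) : X.Reduced (X.red l) := by
  classical
  rw [reduced_iff_isReduced, red_eq_reduce, ← FreeGroup.toWord_mk]
  exact FreeGroup.isReduced_toWord

theorem Reduced.eq_of_mk_eq {l l' : List X.Step} (h : X.Reduced l) (h' : X.Reduced l')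
    (hmk : FreeGroup.mk l = FreeGroup.mk l') : l = l' := by
  classical
  rw [← (reduced_iff_isReduced.mp h).reduce_eq, ← (reduced_iff_isReduced.mp h').reduce_eq]
  exact FreeGroup.reduce.sound hmk

end Reduction

section Walk

variable {X : Digraph'}

theorem stepSrc_inv (e : X.E) (b : Bool) : X.stepSrc (e, !b) = X.stepTgt (e, b) := by
  cases b <;> rfl

theorem stepTgt_inv (e : X.E) (b : Bool) : X.stepTgt (e, !b) = X.stepSrc (e, b) := by
  cases b <;> rfl

theorem isWalk_append {u w : X.V} {x y : List X.Step} :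
    X.IsWalk u w (x ++ y) ↔ ∃ z, X.IsWalk u z x ∧ X.IsWalk z w y := by
  induction x generalizing u with
  | nil => simp [IsWalk]
  | cons q x ih => simp [IsWalk, ih, and_assoc]

theorem IsWalk.append {u w z : X.V} {x y : List X.Step} (hx : X.IsWalk u w x)
    (hy : X.IsWalk w z y) : X.IsWalk u z (x ++ y) :=
  isWalk_append.mpr ⟨w, hx, hy⟩

theorem isWalk_edge (e : X.E) : X.IsWalk (X.s e) (X.r e) [(e, true)] := ⟨rfl, rfl⟩

theorem IsWalk.winv {u w : X.V} {l : List X.Step} (h : X.IsWalk u w l) :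
    X.IsWalk w u (X.winv l) := by
  induction l generalizing u with
  | nil => exact (h : u = w).symm
  | cons q l ih =>
    obtain ⟨e, b⟩ := q
    rw [winv_eq_invRev, FreeGroup.invRev_cons]
    exact (ih h.2).append ⟨stepSrc_inv e b, (stepTgt_inv e b).trans h.1⟩

theorem IsWalk.end_eq {u w w' : X.V} {l : List X.Step} (h : X.IsWalk u w l)
    (h' : X.IsWalk u w' l) : w = w' := by
  induction l generalizing u with
  | nil => exact (h : u = w).symm.trans h'
  | cons q l ih => exact ih h.2 h'.2

theorem IsWalk.of_red_step {u w : X.V} {l l' : List X.Step} (h : X.IsWalk u w l)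
    (hstep : FreeGroup.Red.Step l l') : X.IsWalk u w l' := by
  rcases hstep with @⟨L₁, L₂, x, b⟩
  obtain ⟨z, h₁, hz, -, h₂⟩ := isWalk_append.mp h
  rw [stepTgt_inv, hz] at h₂
  exact h₁.append h₂

theorem IsWalk.red {u w : X.V} {l : List X.Step} (h : X.IsWalk u w l) :
    X.IsWalk u w (X.red l) := by
  classical
  rw [red_eq_reduce]
  have hred : FreeGroup.Red l (FreeGroup.reduce l) := FreeGroup.reduce.red
  generalize FreeGroup.reduce l = l' at hred
  induction hred with
  | refl => exact h
  | tail _ hstep ih => exact ih.of_red_step hstep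

end Walk

section Covering

variable {F E : Digraph'} {p : Hom F E}

theorem Hom.mk_wmap (l : List F.Step) :
    FreeGroup.mk (p.wmap l) = FreeGroup.map p.emap (FreeGroup.mk l) :=
  FreeGroup.map.mk.symm

theorem Hom.stepSrc_map (q : F.Step) : E.stepSrc (p.emap q.1, q.2) = p.vmap (F.stepSrc q) := by
  obtain ⟨e, _ | _⟩ := q
  exacts [p.hr e, p.hs e]

theorem Hom.stepTgt_map (q : F.Step) : E.stepTgt (p.emap q.1, q.2) = p.vmap (F.stepTgt q) := by
  obtain ⟨e, _ | _⟩ := q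
  exacts [p.hs e, p.hr e]

theorem IsWalk.wmap {u w : F.V} {l : List F.Step} (h : F.IsWalk u w l) :
    E.IsWalk (p.vmap u) (p.vmap w) (p.wmap l) := by
  induction l generalizing u with
  | nil => exact congrArg p.vmap (h : u = w)
  | cons q l ih =>
    exact ⟨(p.stepSrc_map q).trans (congrArg p.vmap h.1), p.stepTgt_map q ▸ ih h.2⟩

namespace IsCovering

theorem step_eq (hp : IsCovering p) {q q' : F.Step} (hsrc : F.stepSrc q = F.stepSrc q')
    (hmap : (p.emap q.1, q.2) = (p.emap q'.1, q'.2)) : q = q' := by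
  obtain ⟨e, b⟩ := q
  obtain ⟨e', b'⟩ := q'
  obtain ⟨he, rfl⟩ := Prod.ext_iff.mp hmap
  cases b
  · rw [(hp.rbij (F.r e)).injOn rfl hsrc.symm he]
  · rw [(hp.sbij (F.s e)).injOn rfl hsrc.symm he]

theorem exists_step_lift (hp : IsCovering p) {x : F.V} {t : E.Step}
    (ht : E.stepSrc t = p.vmap x) :
    ∃ q : F.Step, F.stepSrc q = x ∧ (p.emap q.1, q.2) = t := by
  obtain ⟨e, _ | _⟩ := t
  · obtain ⟨e', he', rfl⟩ := (hp.rbij x).surjOn ht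
    exact ⟨(e', false), he', rfl⟩
  · obtain ⟨e', he', rfl⟩ := (hp.sbij x).surjOn ht
    exact ⟨(e', true), he', rfl⟩

theorem exists_walk_lift (hp : IsCovering p) {x : F.V} {y : E.V} {l : List E.Step}
    (h : E.IsWalk (p.vmap x) y l) :
    ∃ (m : List F.Step) (w : F.V), F.IsWalk x w m ∧ p.wmap m = l ∧ p.vmap w = y := by
  induction l generalizing x with
  | nil => exact ⟨[], x, rfl, rfl, h⟩
  | cons t l ih =>
    obtain ⟨q, hq, rfl⟩ := hp.exists_step_lift h.1
    obtain ⟨m, w, hm, rfl, hw⟩ := ih (p.stepTgt_map q ▸ h.2)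
    exact ⟨q :: m, w, ⟨hq, hm⟩, rfl, hw⟩

theorem wmap_injective (hp : IsCovering p) {x w w' : F.V} {m m' : List F.Step}
    (hm : F.IsWalk x w m) (hm' : F.IsWalk x w' m') (h : p.wmap m = p.wmap m') : m = m' := by
  induction m generalizing x m' with
  | nil => exact (List.map_eq_nil_iff.mp h.symm).symm
  | cons q m ih =>
    cases m' with
    | nil => exact absurd h (List.cons_ne_nil _ _)
    | cons q' m' =>
      obtain ⟨hq, hrest⟩ := List.cons.inj h
      obtain rfl := hp.step_eq (hm.1.trans hm'.1.symm) hq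
      rw [ih hm.2 hm'.2 hrest]

theorem reduced_wmap (hp : IsCovering p) {u w : F.V} {l : List F.Step} (h : F.IsWalk u w l)
    (hr : F.Reduced l) : E.Reduced (p.wmap l) := by
  induction l generalizing u with
  | nil => exact List.isChain_nil
  | cons q l ih =>
    cases l with
    | nil => exact List.isChain_singleton _
    | cons q' l =>
      obtain ⟨hqq', hr⟩ := List.isChain_cons_cons.mp hr
      refine List.isChain_cons_cons.mpr ⟨fun ⟨he, hb⟩ => hqq' ?_, ih h.2 hr⟩
      have hinv : (q.1, !q.2) = q' := hp.step_eq ((stepSrc_inv q.1 q.2).trans h.2.1.symm)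
        (Prod.ext he (by simp only at hb ⊢; rw [hb, Bool.not_not]))
      rw [← hinv, Bool.not_not]
      exact ⟨rfl, rfl⟩

theorem end_eq_of_mk_wmap_eq (hp : IsCovering p) {x w w' : F.V} {m m' : List F.Step}
    (hm : F.IsWalk x w m) (hm' : F.IsWalk x w' m')
    (h : FreeGroup.mk (p.wmap m) = FreeGroup.mk (p.wmap m')) : w = w' := by
  have hred : p.wmap (F.red m) = p.wmap (F.red m') :=
    (hp.reduced_wmap hm.red (reduced_red m)).eq_of_mk_eq
      (hp.reduced_wmap hm'.red (reduced_red m'))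
      (by rw [Hom.mk_wmap, Hom.mk_wmap, mk_red, mk_red, ← Hom.mk_wmap, ← Hom.mk_wmap, h])
  exact hm.red.end_eq (hp.wmap_injective hm.red hm'.red hred ▸ hm'.red)

end IsCovering

end Covering

section LoopGroup

variable {X : Digraph'} {u : X.V} [Group (X.Loop u)]

def loopToFreeGroup (hG : ∀ a b : X.Loop u, (a * b).val = X.red (a.val ++ b.val)) :
    X.Loop u →* FreeGroup X.E :=
  MonoidHom.mk' (fun γ => FreeGroup.mk γ.val) fun a b => by
    rw [hG, mk_red, FreeGroup.mul_mk]

theorem loopToFreeGroup_apply (hG : ∀ a b : X.Loop u, (a * b).val = X.red (a.val ++ b.val))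
    (γ : X.Loop u) : loopToFreeGroup hG γ = FreeGroup.mk γ.val := rfl

theorem loopToFreeGroup_injective
    (hG : ∀ a b : X.Loop u, (a * b).val = X.red (a.val ++ b.val)) :
    Function.Injective (loopToFreeGroup hG) :=
  fun γ δ h => Subtype.ext (γ.2.2.eq_of_mk_eq δ.2.2 h)

end LoopGroup

theorem Hom.bijective_emap_of_bijective_vmap {F S E : Digraph'} {p : Hom F E}
    (φ : Hom F S) (π : Hom S E) (hπ : ∀ y, Set.InjOn π.emap {e | S.r e = y})
    (hp : ∀ w, Set.BijOn p.emap {e | F.r e = w} {e | E.r e = p.vmap w})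
    (hv : ∀ w, π.vmap (φ.vmap w) = p.vmap w) (he : ∀ e, π.emap (φ.emap e) = p.emap e)
    (hφ : Function.Bijective φ.vmap) : Function.Bijective φ.emap := by
  refine ⟨fun e e' h => ?_, fun y => ?_⟩
  · have hr : F.r e = F.r e' := hφ.1 (by rw [← φ.hr, ← φ.hr, h])
    exact (hp (F.r e)).injOn rfl hr.symm (by rw [← he, ← he, h])
  · obtain ⟨w, hw⟩ := hφ.2 (S.r y)
    obtain ⟨e, rfl, hey⟩ :=
      (hp w).surjOn (show E.r (π.emap y) = p.vmap w by rw [π.hr, ← hw, hv])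
    have hey' : π.emap (φ.emap e) = π.emap y := by rw [he, hey]
    exact ⟨e, hπ (S.r y) (show S.r (φ.emap e) = S.r y by rw [φ.hr, hw]) rfl hey'⟩

theorem skewProj_injOn {X : Digraph'} {G : Type} [Group G] (c : X.E → G) (H : Subgroup G)
    (y : (X.skew c H).V) : Set.InjOn (X.skewProj c H).emap {e | (X.skew c H).r e = y} :=
  fun _ hy _ hy' h => Prod.ext h ((congrArg Prod.snd hy).trans (congrArg Prod.snd hy').symm)

section SkewProduct

variable {F E : Digraph'} {p : Hom F E} {v : F.V} {a : E.V → List E.Step}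

noncomputable def closingLoop (ha : ∀ w, E.IsWalk (p.vmap v) w (a w)) {w : F.V}
    {l : List F.Step} (hl : F.IsWalk v w l) : E.Loop (p.vmap v) :=
  ⟨E.red (p.wmap l ++ E.winv (a (p.vmap w))), (hl.wmap.append (ha _).winv).red, reduced_red _⟩

theorem mk_closingLoop (ha : ∀ w, E.IsWalk (p.vmap v) w (a w)) {w : F.V} {l : List F.Step}
    (hl : F.IsWalk v w l) :
    FreeGroup.mk (closingLoop ha hl).val =
      FreeGroup.map p.emap (FreeGroup.mk l) * (FreeGroup.mk (a (p.vmap w)))⁻¹ := by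
  rw [closingLoop, mk_red, ← FreeGroup.mul_mk, winv_eq_invRev, ← FreeGroup.inv_mk, Hom.mk_wmap]

variable [Group (E.Loop (p.vmap v))]

theorem closingLoop_mul_label
    (hGE : ∀ x y : E.Loop (p.vmap v), (x * y).val = E.red (x.val ++ y.val))
    (ha : ∀ w, E.IsWalk (p.vmap v) w (a w)) {c : E.E → E.Loop (p.vmap v)}
    (hc : ∀ e, (c e).val = E.red (a (E.s e) ++ (e, true) :: E.winv (a (E.r e))))
    (e : F.E) {l : List F.Step} (hl : F.IsWalk v (F.s e) l) :
    closingLoop ha hl * c (p.emap e) = closingLoop ha (hl.append (isWalk_edge e)) := by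
  refine loopToFreeGroup_injective hGE ?_
  rw [map_mul, loopToFreeGroup_apply, loopToFreeGroup_apply, loopToFreeGroup_apply,
    mk_closingLoop, mk_closingLoop, hc, mk_red, p.hs, p.hr, ← List.singleton_append,
    ← FreeGroup.mul_mk, ← FreeGroup.mul_mk, ← FreeGroup.mul_mk, winv_eq_invRev,
    ← FreeGroup.inv_mk, map_mul, FreeGroup.map.mk (L := [(e, true)]),
    List.map_singleton]
  group

variable [Group (F.Loop v)]

theorem loopToFreeGroup_induced_apply
    (hGE : ∀ x y : E.Loop (p.vmap v), (x * y).val = E.red (x.val ++ y.val))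
    {f : F.Loop v →* E.Loop (p.vmap v)} (hf : ∀ ℓ : F.Loop v, (f ℓ).val = p.wmap ℓ.val)
    (ℓ : F.Loop v) :
    loopToFreeGroup hGE (f ℓ) = FreeGroup.map p.emap (FreeGroup.mk ℓ.val) := by
  rw [loopToFreeGroup_apply, hf, Hom.mk_wmap]

theorem closingLoop_mul_inv_mem_range
    (hGE : ∀ x y : E.Loop (p.vmap v), (x * y).val = E.red (x.val ++ y.val))
    {f : F.Loop v →* E.Loop (p.vmap v)} (hf : ∀ ℓ : F.Loop v, (f ℓ).val = p.wmap ℓ.val)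
    (ha : ∀ w, E.IsWalk (p.vmap v) w (a w)) {w : F.V} {l l' : List F.Step}
    (hl : F.IsWalk v w l) (hl' : F.IsWalk v w l') :
    closingLoop ha hl * (closingLoop ha hl')⁻¹ ∈ f.range := by
  refine ⟨⟨F.red (l ++ F.winv l'), (hl.append hl'.winv).red, reduced_red _⟩,
    loopToFreeGroup_injective hGE ?_⟩
  rw [loopToFreeGroup_induced_apply hGE hf, map_mul, map_inv, loopToFreeGroup_apply,
    loopToFreeGroup_apply, mk_closingLoop, mk_closingLoop, mk_red, ← FreeGroup.mul_mk,
    winv_eq_invRev, ← FreeGroup.inv_mk, map_mul, map_inv]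
  group

theorem eq_of_closingLoop_mul_inv_mem_range (hp : IsCovering p)
    (hGE : ∀ x y : E.Loop (p.vmap v), (x * y).val = E.red (x.val ++ y.val))
    {f : F.Loop v →* E.Loop (p.vmap v)} (hf : ∀ ℓ : F.Loop v, (f ℓ).val = p.wmap ℓ.val)
    (ha : ∀ w, E.IsWalk (p.vmap v) w (a w)) {w w' : F.V} {l l' : List F.Step}
    (hl : F.IsWalk v w l) (hl' : F.IsWalk v w' l') (hw : p.vmap w = p.vmap w')
    (h : closingLoop ha hl * (closingLoop ha hl')⁻¹ ∈ f.range) : w = w' := by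
  obtain ⟨ℓ, hℓ⟩ := h
  have hmk := congrArg (loopToFreeGroup hGE) hℓ
  rw [loopToFreeGroup_induced_apply hGE hf, map_mul, map_inv, loopToFreeGroup_apply,
    loopToFreeGroup_apply, mk_closingLoop, mk_closingLoop, hw] at hmk
  refine (hp.end_eq_of_mk_wmap_eq (ℓ.2.1.append hl') hl ?_).symm
  rw [Hom.mk_wmap, Hom.mk_wmap, ← FreeGroup.mul_mk, map_mul, hmk]
  group

/-- The inverse turns the right coset `p∗π₁(F, v) · closingLoop`, which does not depend on the
walk (`closingLoop_mul_inv_mem_range`), into a left coset, on which the labels act. -/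
noncomputable def vertexCoset (ha : ∀ w, E.IsWalk (p.vmap v) w (a w))
    (f : F.Loop v →* E.Loop (p.vmap v)) (hconn : F.Connected) (w : F.V) :
    E.Loop (p.vmap v) ⧸ f.range :=
  QuotientGroup.mk (closingLoop ha (hconn v w).choose_spec)⁻¹

theorem vertexCoset_eq
    (hGE : ∀ x y : E.Loop (p.vmap v), (x * y).val = E.red (x.val ++ y.val))
    {f : F.Loop v →* E.Loop (p.vmap v)} (hf : ∀ ℓ : F.Loop v, (f ℓ).val = p.wmap ℓ.val)
    (ha : ∀ w, E.IsWalk (p.vmap v) w (a w)) (hconn : F.Connected) {w : F.V}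
    {l : List F.Step} (hl : F.IsWalk v w l) :
    vertexCoset ha f hconn w = QuotientGroup.mk (closingLoop ha hl)⁻¹ := by
  rw [vertexCoset, QuotientGroup.eq, inv_inv]
  exact closingLoop_mul_inv_mem_range hGE hf ha _ hl

theorem label_smul_vertexCoset
    (hGE : ∀ x y : E.Loop (p.vmap v), (x * y).val = E.red (x.val ++ y.val))
    {f : F.Loop v →* E.Loop (p.vmap v)} (hf : ∀ ℓ : F.Loop v, (f ℓ).val = p.wmap ℓ.val)
    (ha : ∀ w, E.IsWalk (p.vmap v) w (a w)) {c : E.E → E.Loop (p.vmap v)}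
    (hc : ∀ e, (c e).val = E.red (a (E.s e) ++ (e, true) :: E.winv (a (E.r e))))
    (hconn : F.Connected) (e : F.E) :
    c (p.emap e) • vertexCoset ha f hconn (F.r e) = vertexCoset ha f hconn (F.s e) := by
  obtain ⟨l, hl⟩ := hconn v (F.s e)
  rw [vertexCoset_eq hGE hf ha hconn (hl.append (isWalk_edge e)),
    vertexCoset_eq hGE hf ha hconn hl, ← closingLoop_mul_label hGE ha hc e hl, mul_inv_rev]
  exact congrArg QuotientGroup.mk (mul_inv_cancel_left _ _)

noncomputable def toSkew
    (hGE : ∀ x y : E.Loop (p.vmap v), (x * y).val = E.red (x.val ++ y.val))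
    {f : F.Loop v →* E.Loop (p.vmap v)} (hf : ∀ ℓ : F.Loop v, (f ℓ).val = p.wmap ℓ.val)
    (ha : ∀ w, E.IsWalk (p.vmap v) w (a w)) {c : E.E → E.Loop (p.vmap v)}
    (hc : ∀ e, (c e).val = E.red (a (E.s e) ++ (e, true) :: E.winv (a (E.r e))))
    (hconn : F.Connected) : Hom F (E.skew c f.range) where
  vmap w := (p.vmap w, vertexCoset ha f hconn w)
  emap e := (p.emap e, vertexCoset ha f hconn (F.r e))
  hr e := Prod.ext (p.hr e) rfl
  hs e := Prod.ext (p.hs e) (label_smul_vertexCoset hGE hf ha hc hconn e)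

theorem bijective_toSkew_vmap (hp : IsCovering p)
    (hGE : ∀ x y : E.Loop (p.vmap v), (x * y).val = E.red (x.val ++ y.val))
    {f : F.Loop v →* E.Loop (p.vmap v)} (hf : ∀ ℓ : F.Loop v, (f ℓ).val = p.wmap ℓ.val)
    (ha : ∀ w, E.IsWalk (p.vmap v) w (a w)) {c : E.E → E.Loop (p.vmap v)}
    (hc : ∀ e, (c e).val = E.red (a (E.s e) ++ (e, true) :: E.winv (a (E.r e))))
    (hconn : F.Connected) : Function.Bijective (toSkew hGE hf ha hc hconn).vmap := by
  refine ⟨fun w w' h => ?_, fun ⟨x, γ⟩ => ?_⟩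
  · have hcoset : vertexCoset ha f hconn w = vertexCoset ha f hconn w' := congrArg Prod.snd h
    rw [vertexCoset, vertexCoset, QuotientGroup.eq, inv_inv] at hcoset
    exact eq_of_closingLoop_mul_inv_mem_range hp hGE hf ha _ _ (congrArg Prod.fst h) hcoset
  · induction γ using QuotientGroup.induction_on with | H γ => ?_
    obtain ⟨m, w, hm, hwm, rfl⟩ := hp.exists_walk_lift (γ.2.1.winv.append (ha x))
    have hγ : closingLoop ha hm = γ⁻¹ := by
      refine loopToFreeGroup_injective hGE ?_
      rw [loopToFreeGroup_apply, mk_closingLoop, ← Hom.mk_wmap, hwm, map_inv,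
        loopToFreeGroup_apply, ← FreeGroup.mul_mk, winv_eq_invRev, ← FreeGroup.inv_mk]
      group
    refine ⟨w, Prod.ext rfl ?_⟩
    change vertexCoset ha f hconn w = _
    rw [vertexCoset_eq hGE hf ha hconn hm, hγ, inv_inv]

end SkewProduct

end Digraph'

theorem covering_iso_relative_skew_product_general {F E : Digraph'} (p : Digraph'.Hom F E)
    (hp : Digraph'.IsCovering p) (hconnF : F.Connected) (v : F.V)
    [GF : Group (F.Loop v)]
    [GE : Group (E.Loop (p.vmap v))]
    (hGE : ∀ a b : E.Loop (p.vmap v), (a * b).val = E.red (a.val ++ b.val))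
    (f : F.Loop v →* E.Loop (p.vmap v))
    (hf : ∀ l : F.Loop v, (f l).val = p.wmap l.val)
    (T : Set E.E)
    (a : E.V → List E.Step)
    (ha : ∀ w, E.IsWalk (p.vmap v) w (a w) ∧ E.Reduced (a w) ∧ E.InTree T (a w))
    (c : E.E → E.Loop (p.vmap v))
    (hc : ∀ e, (c e).val = E.red (a (E.s e) ++ (e, true) :: E.winv (a (E.r e)))) :
    ∃ φ : Digraph'.Hom F (E.skew c f.range),
      Function.Bijective φ.vmap ∧ Function.Bijective φ.emap := by
  have haWalk : ∀ w, E.IsWalk (p.vmap v) w (a w) := fun w => (ha w).1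
  have hvmap := bijective_toSkew_vmap hp hGE hf haWalk hc hconnF
  refine ⟨toSkew hGE hf haWalk hc hconnF, hvmap, ?_⟩
  exact Hom.bijective_emap_of_bijective_vmap _ (E.skewProj c f.range) (skewProj_injOn c _)
    hp.rbij (fun _ => rfl) (fun _ => rfl) hvmap

/-- a connected covering `p : F → E` is isomorphic to the relative skew
product `E ×_c (π₁(E, p(v)) / p₊π₁(F, v))`, where `c = c_{p(v),T}` is the labelling
`c(e) = a_{s(e)} e a_{r(e)}⁻¹` determined by a spanning tree `T` and base point `p(v)`. -/
theorem covering_iso_relative_skew_product {F E : Digraph'} (p : Digraph'.Hom F E)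
    (hp : Digraph'.IsCovering p) (hconnF : F.Connected) (v : F.V)
    [GF : Group (F.Loop v)]
    (hGF : ∀ a b : F.Loop v, (a * b).val = F.red (a.val ++ b.val))
    [GE : Group (E.Loop (p.vmap v))]
    (hGE : ∀ a b : E.Loop (p.vmap v), (a * b).val = E.red (a.val ++ b.val))
    (f : F.Loop v →* E.Loop (p.vmap v))
    (hf : ∀ l : F.Loop v, (f l).val = p.wmap l.val) (hfinj : Function.Injective f)
    (T : Set E.E) (hT : E.IsSpanningTree T)
    (a : E.V → List E.Step)
    (ha : ∀ w, E.IsWalk (p.vmap v) w (a w) ∧ E.Reduced (a w) ∧ E.InTree T (a w))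
    (c : E.E → E.Loop (p.vmap v))
    (hc : ∀ e, (c e).val = E.red (a (E.s e) ++ (e, true) :: E.winv (a (E.r e)))) :
    ∃ φ : Digraph'.Hom F (E.skew c f.range),
      Function.Bijective φ.vmap ∧ Function.Bijective φ.emap :=
  covering_iso_relative_skew_product_general p hp hconnF v (GF := GF) (GE := GE) hGE f hf T a ha c
    hc
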